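/- arXiv:2310.05540 — 2 statements merged into one kernel-verified Lean document; each statement's English description precedes it below -/
import Mathlib

section
/- Let p be an odd prime and q = p^2. For k ≥ 1, σ**(x^{2k}) splits over F_q (is a product of linear factors) if and only if k ∈ Ω. -/
open Polynomial

variable {F : Type*} [Field F]

/-- `D` is a (monic) unitary divisor of `S`: `D ∣ S` and `gcd(D, S/D) = 1`. -/
def IsUnitaryDivisor (D S : Polynomial F) : Prop :=
  D.Monic ∧ D ∣ S ∧ IsCoprime D (S / D)

/-- `D` is a (monic) bi-unitary divisor of `S`: `gcd_u(D, S/D) = 1`, i.e. the only common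
monic unitary divisor of `D` and `S/D` is `1`. -/
def IsBiunitaryDivisor (D S : Polynomial F) : Prop :=
  D.Monic ∧ D ∣ S ∧
    ∀ G : Polynomial F, IsUnitaryDivisor G D → IsUnitaryDivisor G (S / D) → G = 1

/-- `σ(S)`: the sum of all monic divisors of `S`. -/
noncomputable def sigma' (S : Polynomial F) : Polynomial F :=
  ∑ᶠ D ∈ {D : Polynomial F | D.Monic ∧ D ∣ S}, D

/-- `σ**(S)`: the sum of all monic bi-unitary divisors of `S`. -/
noncomputable def sigmaStarStar (S : Polynomial F) : Polynomial F :=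
  ∑ᶠ D ∈ {D : Polynomial F | IsBiunitaryDivisor D S}, D

/-- `S` is bi-unitary perfect: `σ**(S) = S`. -/
def IsBUP (S : Polynomial F) : Prop := sigmaStarStar S = S

/-- `Ω₁ = {N ∈ ℕ* : N ∣ p²-1 and 2N+2 ∣ p²-1}`. -/
def Omega1 (p : ℕ) : Set ℕ := {N | 0 < N ∧ N ∣ (p ^ 2 - 1) ∧ (2 * N + 2) ∣ (p ^ 2 - 1)}

/-- `Ω₂ = {pN : N ∈ ℕ*, N ∣ p²-1 and 2pN+2 ∣ p²-1}`. -/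
def Omega2 (p : ℕ) : Set ℕ :=
  {m | ∃ N : ℕ, 0 < N ∧ m = p * N ∧ N ∣ (p ^ 2 - 1) ∧ (2 * p * N + 2) ∣ (p ^ 2 - 1)}

/-- `Ω₃ = {N ∈ ℕ* : N ∣ p²-1, 2N+2 = M·p with M ∣ p²-1}`. -/
def Omega3 (p : ℕ) : Set ℕ :=
  {N | 0 < N ∧ N ∣ (p ^ 2 - 1) ∧ ∃ M : ℕ, M ∣ (p ^ 2 - 1) ∧ 2 * N + 2 = M * p}

/-- `Ω₄ = {N ∈ ℕ* : N ∣ p²-1, 2N+2 = M·p² with M ∣ p²-1}`. -/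
def Omega4 (p : ℕ) : Set ℕ :=
  {N | 0 < N ∧ N ∣ (p ^ 2 - 1) ∧ ∃ M : ℕ, M ∣ (p ^ 2 - 1) ∧ 2 * N + 2 = M * p ^ 2}

/-- `Ω = Ω₁ ∪ Ω₂ ∪ Ω₃ ∪ Ω₄`. -/
def OmegaSet (p : ℕ) : Set ℕ := Omega1 p ∪ Omega2 p ∪ Omega3 p ∪ Omega4 p

/-! The bi-unitary divisors of `X^(2k)` are the `X^i` with `i ≤ 2k`, `i ≠ k`, so
`σ**(X^(2k)) = (1 + X + ⋯ + X^(k-1)) (X^(k+1) + 1)`. This splits iff `X^k - 1` and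
`X^(2k+2) - 1 = (X^(k+1) - 1)(X^(k+1) + 1)` split: the ratio of two roots of `X^(k+1) + 1` is a
root of `X^(k+1) - 1`. Over `F_q`, writing `n = p^a m` with `p ∤ m`, we have
`X^n - 1 = (X^m - 1)^(p^a)`, and the separable `X^m - 1` splits iff its roots form a subgroup of
order `m` of `F_qˣ`, i.e. iff `m ∣ q - 1`. Finally every divisor of `p² - 1` is less than `p²`, so
the `p`-adic valuations of `k` and `2k + 2` are at most `1` and `2` and not both positive; the four
possibilities are exactly `Ω₁, …, Ω₄`. -/

open Finset

namespace Polynomial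

theorem Monic.exists_eq_X_pow_of_dvd_X_pow {D : F[X]} {n : ℕ} (hD : D.Monic)
    (h : D ∣ X ^ n) : ∃ i ≤ n, D = X ^ i := by
  obtain ⟨i, hi, hassoc⟩ := (dvd_prime_pow prime_X n).1 h
  exact ⟨i, hi, eq_of_monic_of_associated hD (monic_X_pow i) hassoc⟩

lemma X_pow_injective : Function.Injective (fun i : ℕ => (X ^ i : F[X])) :=
  pow_injective_of_not_isUnit not_isUnit_X X_ne_zero

lemma X_pow_div_X_pow {i n : ℕ} (h : i ≤ n) : (X ^ n : F[X]) / X ^ i = X ^ (n - i) := by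
  obtain ⟨j, rfl⟩ := Nat.exists_eq_add_of_le h
  rw [pow_add, mul_div_cancel_left₀ _ (pow_ne_zero _ X_ne_zero), Nat.add_sub_cancel_left]

end Polynomial

lemma isUnitaryDivisor_self {S : F[X]} (hS : S.Monic) : IsUnitaryDivisor S S := by
  refine ⟨hS, dvd_rfl, ?_⟩
  rw [EuclideanDomain.div_self hS.ne_zero]
  exact isCoprime_one_right

lemma IsUnitaryDivisor.eq_one_or_eq_X_pow {G : F[X]} {n : ℕ} (h : IsUnitaryDivisor G (X ^ n)) :
    G = 1 ∨ G = X ^ n := by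
  obtain ⟨hG, hdvd, hcop⟩ := h
  obtain ⟨i, hi, rfl⟩ := hG.exists_eq_X_pow_of_dvd_X_pow hdvd
  rcases Nat.eq_zero_or_pos i with rfl | hi0
  · exact Or.inl (pow_zero X)
  rcases hi.eq_or_lt with rfl | hin
  · exact Or.inr rfl
  rw [X_pow_div_X_pow hi] at hcop
  exact absurd (hcop.isUnit_of_dvd' (dvd_pow_self X hi0.ne') (dvd_pow_self X (by omega)))
    not_isUnit_X

lemma isBiunitaryDivisor_X_pow_two_mul_iff {D : F[X]} {k : ℕ} (hk : k ≠ 0) :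
    IsBiunitaryDivisor D (X ^ (2 * k)) ↔ ∃ i ≤ 2 * k, i ≠ k ∧ D = X ^ i := by
  constructor
  · rintro ⟨hD, hdvd, hcop⟩
    obtain ⟨i, hi, rfl⟩ := hD.exists_eq_X_pow_of_dvd_X_pow hdvd
    refine ⟨i, hi, ?_, rfl⟩
    rintro rfl
    have hself := isUnitaryDivisor_self (monic_X_pow (R := F) i)
    have hquot : (X ^ (2 * i) : F[X]) / X ^ i = X ^ i := by
      rw [X_pow_div_X_pow hi, two_mul, Nat.add_sub_cancel]
    exact hk (X_pow_injective (hcop _ hself (by rw [hquot]; exact hself)))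
  · rintro ⟨i, hi, hik, rfl⟩
    refine ⟨monic_X_pow i, pow_dvd_pow X hi, fun G hGi hGc => ?_⟩
    rw [X_pow_div_X_pow hi] at hGc
    rcases hGi.eq_one_or_eq_X_pow with hG | rfl
    · exact hG
    rcases hGc.eq_one_or_eq_X_pow with hG | hG
    · exact hG
    · exact absurd (X_pow_injective hG) (by omega)

lemma geom_sum_erase_middle_eq_mul {R : Type*} [CommRing R] (x : R) (k : ℕ) :
    ∑ i ∈ (range (2 * k + 1)).erase k, x ^ i = (∑ i ∈ range k, x ^ i) * (x ^ (k + 1) + 1) := by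
  have htotal := sum_erase_add (range (2 * k + 1)) (fun i => x ^ i) (a := k) (by simp; omega)
  rw [show 2 * k + 1 = k + 1 + k by ring] at htotal ⊢
  rw [sum_range_add, sum_range_succ] at htotal
  simp only [pow_add x (k + 1), ← mul_sum] at htotal
  linear_combination htotal

theorem sigmaStarStar_X_pow_two_mul {k : ℕ} (hk : k ≠ 0) :
    sigmaStarStar (X ^ (2 * k) : F[X]) = (∑ i ∈ range k, X ^ i) * (X ^ (k + 1) + 1) := by
  classical
  have hset : {D : F[X] | IsBiunitaryDivisor D (X ^ (2 * k))} =
      ↑(((range (2 * k + 1)).erase k).image (fun i => (X ^ i : F[X]))) := by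
    ext D
    simp only [Set.mem_ofPred_eq, isBiunitaryDivisor_X_pow_two_mul_iff hk, coe_image, coe_erase,
      coe_range, Set.mem_image, Set.mem_sdiff, Set.mem_Iio, Set.mem_singleton_iff, eq_comm (a := D)]
    exact exists_congr fun i => by rw [Nat.lt_succ_iff, ne_eq, and_assoc]
  rw [sigmaStarStar, hset, finsum_mem_coe_finset, sum_image X_pow_injective.injOn,
    geom_sum_erase_middle_eq_mul]

lemma splits_geom_sum_X_iff {k : ℕ} (hk : k ≠ 0) :
    (∑ i ∈ range k, X ^ i : F[X]).Splits ↔ (X ^ k - 1 : F[X]).Splits := by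
  have hne : (X ^ k - 1 : F[X]) ≠ 0 := by
    simpa using X_pow_sub_C_ne_zero (Nat.pos_of_ne_zero hk) (1 : F)
  rw [← geom_sum_mul] at hne ⊢
  refine ⟨fun h => h.mul ?_, fun h => h.of_dvd hne (dvd_mul_right _ _)⟩
  simpa using Splits.X_sub_C (1 : F)

lemma splits_X_pow_add_one_iff {n : ℕ} (hn : n ≠ 0) :
    (X ^ n + 1 : F[X]).Splits ↔ (X ^ (2 * n) - 1 : F[X]).Splits := by
  have hfactor : (X ^ (2 * n) - 1 : F[X]) = (X ^ n - 1) * (X ^ n + 1) := by ring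
  have hne : (X ^ (2 * n) - 1 : F[X]) ≠ 0 := by
    simpa using X_pow_sub_C_ne_zero (by omega : 0 < 2 * n) (1 : F)
  refine ⟨fun h => ?_, fun h => h.of_dvd hne (hfactor ▸ dvd_mul_left _ _)⟩
  have hsub : (X ^ n - 1 : F[X]).Splits := by
    simpa using splits_X_pow_sub_one_of_X_pow_sub_C (RingHom.id F) n (neg_ne_zero.2 one_ne_zero)
      (by simpa using h)
  exact hfactor ▸ hsub.mul h

theorem splits_sigmaStarStar_X_pow_two_mul_iff {k : ℕ} (hk : k ≠ 0) :
    (sigmaStarStar (X ^ (2 * k) : F[X])).Splits ↔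
      (X ^ k - 1 : F[X]).Splits ∧ (X ^ (2 * k + 2) - 1 : F[X]).Splits := by
  have hne : (X ^ (k + 1) + 1 : F[X]) ≠ 0 := by
    simpa using X_pow_add_C_ne_zero k.succ_pos (1 : F)
  rw [sigmaStarStar_X_pow_two_mul hk, splits_mul (monic_geom_sum_X hk).ne_zero hne,
    splits_geom_sum_X_iff hk, splits_X_pow_add_one_iff (by omega), mul_add_one]

namespace FiniteField

variable {K : Type*} [Field K]

theorem splits_X_pow_sub_one_of_dvd [Finite K] {n : ℕ} (h : n ∣ Nat.card K - 1) :
    (X ^ n - 1 : K[X]).Splits := by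
  have hq : 1 < Nat.card K := Finite.one_lt_card
  obtain ⟨c, hc⟩ := h
  have h1 : (X ^ n - 1 : K[X]) ∣ X ^ (Nat.card K - 1) - 1 := by
    simpa [← pow_mul, ← hc] using sub_dvd_pow_sub_pow (X ^ n : K[X]) 1 c
  have h2 : (X ^ (Nat.card K - 1) - 1 : K[X]) ∣ X ^ Nat.card K - X :=
    ⟨X, by rw [sub_mul, one_mul, ← pow_succ, Nat.sub_add_cancel hq.le]⟩
  exact (Polynomial.splits_X_pow_nat_card_sub_X (K := K)).of_dvd
    (X_pow_card_sub_X_ne_zero K hq) (h1.trans h2)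

theorem dvd_card_sub_one_of_splits {n : ℕ} (hn : (n : K) ≠ 0) (h : (X ^ n - 1 : K[X]).Splits) :
    n ∣ Nat.card K - 1 := by
  have : NeZero n := ⟨by rintro rfl; exact hn Nat.cast_zero⟩
  have hnodup : (nthRoots n (1 : K)).Nodup := by
    rw [nthRoots, C_1]
    exact nodup_roots (X_pow_sub_one_separable_iff.2 hn)
  have hcard : Multiset.card (nthRoots n (1 : K)) = n := by
    rw [nthRoots, C_1, splits_iff_card_roots.1 h, ← C_1, natDegree_X_pow_sub_C]
  classical
  calc n = Multiset.card (nthRoots n (1 : K)) := hcard.symm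
    _ = Nat.card (rootsOfUnity n K) := by
        rw [Nat.card_congr (rootsOfUnityEquivNthRoots K n),
          ← Multiset.toFinset_card_of_nodup hnodup, ← Nat.card_eq_finsetCard]
        simp
    _ ∣ Nat.card Kˣ := Subgroup.card_subgroup_dvd_card _
    _ = Nat.card K - 1 := Nat.card_units K

theorem splits_X_pow_sub_one_iff_ordCompl_dvd (p : ℕ) [hp : Fact p.Prime] [CharP K p] [Finite K]
    {n : ℕ} (hn : n ≠ 0) :
    (X ^ n - 1 : K[X]).Splits ↔ ordCompl[p] n ∣ Nat.card K - 1 := by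
  obtain ⟨a, m, hpm, rfl⟩ := Nat.exists_eq_pow_mul_and_not_dvd hn p hp.out.ne_one
  have hm : (m : K) ≠ 0 := by rwa [Ne, CharP.cast_eq_zero_iff K p]
  have hne : (X ^ m - 1 : K[X]) ≠ 0 := by
    simpa using X_pow_sub_C_ne_zero (Nat.pos_of_ne_zero (by rintro rfl; simp at hm)) (1 : K)
  have hfrob : (X ^ m - 1 : K[X]) ^ p ^ a = X ^ (p ^ a * m) - 1 := by
    rw [sub_pow_char_pow, one_pow, ← pow_mul, mul_comm]
  rw [← hfrob, Nat.ordCompl_pow_mul_of_not_dvd a hp.out hpm]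
  refine ⟨fun h => dvd_card_sub_one_of_splits hm ?_, fun h => (splits_X_pow_sub_one_of_dvd h).pow _⟩
  exact h.of_dvd (pow_ne_zero _ hne) (dvd_pow_self _ (pow_ne_zero _ hp.out.ne_zero))

end FiniteField

section Omega

variable {p : ℕ}

lemma ordCompl_dvd_of_mem_omegaSet (hp : p.Prime) {k : ℕ} (hk : k ∈ OmegaSet p) :
    ordCompl[p] k ∣ p ^ 2 - 1 ∧ ordCompl[p] (2 * k + 2) ∣ p ^ 2 - 1 := by
  have hself {m n : ℕ} (h : m ∣ n) : ordCompl[p] m ∣ n := (Nat.ordCompl_dvd m p).trans h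
  have hpow {a m n : ℕ} (h : m ∣ n) : ordCompl[p] (p ^ a * m) ∣ n := by
    rw [Nat.ordCompl_self_pow_mul m a hp]
    exact hself h
  have hpow_one {m n : ℕ} (h : m ∣ n) : ordCompl[p] (p * m) ∣ n := by
    simpa only [pow_one] using hpow (a := 1) h
  rcases hk with ((⟨-, h1, h2⟩ | ⟨N, -, rfl, h1, h2⟩) | ⟨-, h1, M, hM, h2⟩) | ⟨-, h1, M, hM, h2⟩
  · exact ⟨hself h1, hself h2⟩
  · exact ⟨hpow_one h1, hself (by rwa [← mul_assoc])⟩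
  · exact ⟨hself h1, by rw [h2, mul_comm]; exact hpow_one hM⟩
  · exact ⟨hself h1, by rw [h2, mul_comm]; exact hpow hM⟩

lemma mem_omegaSet_of_ordCompl_dvd (hp : p.Prime) (hodd : Odd p) {k : ℕ} (hk : k ≠ 0)
    (h1 : ordCompl[p] k ∣ p ^ 2 - 1) (h2 : ordCompl[p] (2 * k + 2) ∣ p ^ 2 - 1) :
    k ∈ OmegaSet p := by
  have hp3 : 3 ≤ p := by have := hp.two_le; have := Nat.odd_iff.1 hodd; omega
  have hq : 1 < p ^ 2 := Nat.one_lt_pow two_ne_zero hp.one_lt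
  have hlt {d : ℕ} (h : d ∣ p ^ 2 - 1) : d < p ^ 2 := by
    have := Nat.le_of_dvd (by omega) h
    omega
  obtain ⟨a, m, hpm, hkm⟩ := Nat.exists_eq_pow_mul_and_not_dvd hk p hp.ne_one
  obtain ⟨b, M, hpM, hkM⟩ :=
    Nat.exists_eq_pow_mul_and_not_dvd (n := 2 * k + 2) (by omega) p hp.ne_one
  rw [hkm, Nat.ordCompl_pow_mul_of_not_dvd a hp hpm] at h1
  rw [hkM, Nat.ordCompl_pow_mul_of_not_dvd b hp hpM] at h2
  have hm0 : 0 < m := Nat.pos_of_ne_zero (by rintro rfl; simp at hkm; omega)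
  have hM0 : 0 < M := Nat.pos_of_ne_zero (by rintro rfl; simp at hkM)
  have hpow_le_k : p ^ a ≤ k := hkm ▸ Nat.le_mul_of_pos_right _ hm0
  have hpow_le_2k : p ^ b ≤ 2 * k + 2 := hkM ▸ Nat.le_mul_of_pos_right _ hM0
  have hpow_lt {e c : ℕ} (h : p ^ e < p ^ c) : e < c := (Nat.pow_lt_pow_iff_right hp.one_lt).1 h
  rcases Nat.eq_zero_or_pos a with rfl | ha
  · rw [pow_zero, one_mul] at hkm
    subst hkm
    have hk_lt := hlt h1
    have hb : b < 3 := hpow_lt (by nlinarith)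
    obtain rfl | rfl | rfl : b = 0 ∨ b = 1 ∨ b = 2 := by omega
    · exact Or.inl (Or.inl (Or.inl ⟨hm0, h1, by rwa [hkM, pow_zero, one_mul]⟩))
    · exact Or.inl (Or.inr ⟨hm0, h1, M, h2, by rw [hkM, pow_one, mul_comm]⟩)
    · exact Or.inr ⟨hm0, h1, M, h2, by rw [hkM, mul_comm]⟩
  · have hb : b = 0 := by
      by_contra hb
      have hpk : p ∣ k := hkm ▸ (dvd_pow_self p ha.ne').mul_right m
      have hpk2 : p ∣ 2 * k + 2 := hkM ▸ (dvd_pow_self p hb).mul_right M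
      have := Nat.le_of_dvd two_pos ((Nat.dvd_add_right (hpk.mul_left 2)).1 hpk2)
      omega
    rw [hb, pow_zero, one_mul] at hkM
    have hk_lt : k < p ^ 2 := by have := hlt h2; omega
    obtain rfl : a = 1 := by have := hpow_lt (hpow_le_k.trans_lt hk_lt); omega
    rw [pow_one] at hkm
    refine Or.inl (Or.inl (Or.inr ⟨m, hm0, hkm, h1, ?_⟩))
    rwa [mul_assoc, ← hkm, hkM]

theorem mem_omegaSet_iff (hp : p.Prime) (hodd : Odd p) {k : ℕ} (hk : k ≠ 0) :
    k ∈ OmegaSet p ↔ ordCompl[p] k ∣ p ^ 2 - 1 ∧ ordCompl[p] (2 * k + 2) ∣ p ^ 2 - 1 :=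
  ⟨ordCompl_dvd_of_mem_omegaSet hp, fun h => mem_omegaSet_of_ordCompl_dvd hp hodd hk h.1 h.2⟩

end Omega

theorem stmt9 (p : ℕ) [Fact p.Prime] (hp : Odd p) (k : ℕ) (hk : 1 ≤ k) :
    (sigmaStarStar (X ^ (2 * k) : Polynomial (GaloisField p 2))).Splits ↔ k ∈ OmegaSet p := by
  have hk0 : k ≠ 0 := by omega
  rw [splits_sigmaStarStar_X_pow_two_mul_iff hk0,
    FiniteField.splits_X_pow_sub_one_iff_ordCompl_dvd p hk0,
    FiniteField.splits_X_pow_sub_one_iff_ordCompl_dvd p (by omega),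
    GaloisField.card p 2 two_ne_zero, mem_omegaSet_iff Fact.out hp hk0]
end

section
/- Let p be an odd prime, q = p², and m ∈ Ω. Then the polynomial A = ∏_{γ ∈ F_q} (x − γ)^{2m} = (x^q − x)^{2m} is bi-unitary perfect over F_q. -/
open Polynomial

variable {F : Type*} [Field F]

/-!
Over a finite field `F` with `q` elements put `L = X ^ q - X = ∏ γ, (X - γ)`. The bi-unitary
divisors of `L ^ (2m)` are the products `∏ γ, (X - γ) ^ e γ` with `e γ ≤ 2m` and `e γ ≠ m`, so
`σ**(L ^ (2m)) = ∏ γ, ∑ (X - γ) ^ b` over `b ≤ 2m`, `b ≠ m`. Since `L = ∏ γ, (X - γ - 1)` as well,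
`L σ**(L ^ (2m)) = ∏ γ, ((X - γ) ^ m - 1) ((X - γ) ^ (m + 1) + 1)`. Translating the roots of a monic
split `P` by every `γ ∈ F` gives `∏ γ, P (X - γ) = L ^ deg P`, hence `σ**(L ^ (2m)) = L ^ (2m)`
whenever `X ^ m - 1` and `X ^ (m + 1) + 1` split over `F`. For `q = p²` and `m ∈ Ω` they do:
`X ^ n - 1` splits when `n ∣ q - 1`, `X ^ n + 1` when `2n ∣ q - 1`, and both survive multiplying
`n` by a power of `p`, which by Frobenius only raises the polynomial to that power.
-/

theorem isUnitaryDivisor_X_sub_C_pow_rootMultiplicity {S : F[X]} (hS : S ≠ 0) (γ : F) :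
    IsUnitaryDivisor ((X - C γ) ^ rootMultiplicity γ S) S := by
  obtain ⟨Q, hSQ, hQ⟩ := exists_eq_pow_rootMultiplicity_mul_and_not_dvd S hS γ
  generalize rootMultiplicity γ S = k at hSQ ⊢
  subst hSQ
  refine ⟨(monic_X_sub_C γ).pow k, dvd_mul_right _ _, ?_⟩
  rw [mul_div_cancel_left₀ _ (pow_ne_zero _ (X_sub_C_ne_zero γ))]
  exact ((irreducible_X_sub_C γ).coprime_iff_not_dvd.mpr hQ).pow_left

theorem rootMultiplicity_eq_of_isUnitaryDivisor {G S : F[X]} (hG : IsUnitaryDivisor G S)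
    (hS : S ≠ 0) {γ : F} (hγ : G.IsRoot γ) : rootMultiplicity γ G = rootMultiplicity γ S := by
  obtain ⟨-, hdvd, hcop⟩ := hG
  have hS' : S = G * (S / G) :=
    (EuclideanDomain.mul_div_cancel' (ne_zero_of_dvd_ne_zero hS hdvd) hdvd).symm
  have hquot : rootMultiplicity γ (S / G) = 0 :=
    rootMultiplicity_eq_zero fun h => not_isUnit_X_sub_C γ <|
      hcop.isUnit_of_dvd' (dvd_iff_isRoot.mpr hγ) (dvd_iff_isRoot.mpr h)
  conv_rhs => rw [hS', rootMultiplicity_mul (hS' ▸ hS), hquot, add_zero]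

theorem isBiunitaryDivisor_iff_of_splits {S D : F[X]} (hS : S ≠ 0) (hs : S.Splits) :
    IsBiunitaryDivisor D S ↔ D.Monic ∧ D ∣ S ∧
      ∀ γ, rootMultiplicity γ D = rootMultiplicity γ (S / D) → rootMultiplicity γ D = 0 := by
  refine and_congr_right fun hmon => and_congr_right fun hdvd => ?_
  have hD : D ≠ 0 := hmon.ne_zero
  have hSD : S / D ≠ 0 :=
    right_ne_zero_of_mul ((EuclideanDomain.mul_div_cancel' hD hdvd).symm ▸ hS)
  constructor
  · intro hG γ heq
    by_contra hk
    have hunit := hG _ (isUnitaryDivisor_X_sub_C_pow_rootMultiplicity hD γ)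
      (heq ▸ isUnitaryDivisor_X_sub_C_pow_rootMultiplicity hSD γ)
    have := congrArg natDegree hunit
    simp only [natDegree_pow, natDegree_X_sub_C, mul_one, natDegree_one] at this
    exact hk this
  · intro h G hGD hGSD
    by_contra hG1
    have hGs : G.Splits := (hs.of_dvd hS hdvd).of_dvd hD hGD.2.1
    obtain ⟨γ, hγ⟩ := hGs.exists_eval_eq_zero fun hdeg =>
      hG1 (hGD.1.natDegree_eq_zero.mp (natDegree_eq_zero_iff_degree_le_zero.mpr hdeg.le))
    have hGγ := rootMultiplicity_eq_of_isUnitaryDivisor hGD hD hγ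
    have hpos := (rootMultiplicity_pos hGD.1.ne_zero).mpr hγ
    rw [hGγ, h γ (hGγ.symm.trans (rootMultiplicity_eq_of_isUnitaryDivisor hGSD hSD hγ))] at hpos
    exact hpos.false

theorem pow_sub_one_dvd_pow_sub_one {R : Type*} [CommRing R] (x : R) {m k : ℕ} (h : m ∣ k) :
    x ^ m - 1 ∣ x ^ k - 1 := by
  obtain ⟨j, rfl⟩ := h
  simpa [pow_mul] using sub_dvd_pow_sub_pow (x ^ m) 1 j

theorem Polynomial.Splits.X_pow_mul_expChar_pow_sub_one {p : ℕ} [ExpChar F p] {n : ℕ}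
    (h : (X ^ n - 1 : F[X]).Splits) (k : ℕ) : (X ^ (n * p ^ k) - 1 : F[X]).Splits := by
  have hfrob : (X ^ (n * p ^ k) - 1 : F[X]) = (X ^ n - 1) ^ p ^ k := by
    rw [sub_pow_expChar_pow, one_pow, pow_mul]
  exact hfrob ▸ h.pow _

theorem Polynomial.Splits.X_pow_mul_expChar_pow_add_one {p : ℕ} [ExpChar F p] {n : ℕ}
    (h : (X ^ n + 1 : F[X]).Splits) (k : ℕ) : (X ^ (n * p ^ k) + 1 : F[X]).Splits := by
  have hfrob : (X ^ (n * p ^ k) + 1 : F[X]) = (X ^ n + 1) ^ p ^ k := by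
    rw [add_pow_expChar_pow, one_pow, pow_mul]
  exact hfrob ▸ h.pow _

/-- For irreducible `π`, `π ^ b` is a bi-unitary divisor of `π ^ n` iff
`b ∈ biunitaryExponents n`. -/
def biunitaryExponents (n : ℕ) : Finset ℕ :=
  (Finset.range (n + 1)).filter fun b => b = n - b → b = 0

theorem biunitaryExponents_two_mul {m : ℕ} (hm : m ≠ 0) :
    biunitaryExponents (2 * m) = (Finset.range (2 * m + 1)).erase m := by
  ext b
  simp only [biunitaryExponents, Finset.mem_filter, Finset.mem_erase, Finset.mem_range]
  omega

theorem sub_one_mul_sum_biunitaryExponents_two_mul {R : Type*} [CommRing R] (y : R) {m : ℕ}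
    (hm : m ≠ 0) :
    (y - 1) * ∑ b ∈ biunitaryExponents (2 * m), y ^ b = (y ^ m - 1) * (y ^ (m + 1) + 1) := by
  rw [biunitaryExponents_two_mul hm,
    Finset.sum_erase_eq_sub (Finset.mem_range.mpr (by omega : m < 2 * m + 1))]
  linear_combination mul_geom_sum y (2 * m + 1)

section FiniteField

variable [Fintype F]

noncomputable def prodXSubCPow (e : F → ℕ) : F[X] := ∏ γ, (X - C γ) ^ e γ

theorem monic_prodXSubCPow (e : F → ℕ) : (prodXSubCPow e).Monic :=
  monic_prod_of_monic _ _ fun γ _ => (monic_X_sub_C γ).pow _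

theorem splits_prodXSubCPow (e : F → ℕ) : (prodXSubCPow e).Splits :=
  Splits.prod fun γ _ => (Splits.X_sub_C γ).pow _

theorem prodXSubCPow_add (e f : F → ℕ) :
    prodXSubCPow (e + f) = prodXSubCPow e * prodXSubCPow f := by
  simp only [prodXSubCPow, Pi.add_apply, pow_add, Finset.prod_mul_distrib]

theorem rootMultiplicity_prodXSubCPow (e : F → ℕ) (γ : F) :
    rootMultiplicity γ (prodXSubCPow e) = e γ := by
  classical
  rw [← count_roots, prodXSubCPow, roots_prod _ _ (monic_prodXSubCPow e).ne_zero]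
  simp [Multiset.count_bind, roots_pow, Multiset.count_nsmul, Multiset.count_singleton]

theorem prodXSubCPow_injective : Function.Injective (prodXSubCPow (F := F)) := fun e f h =>
  funext fun γ => by rw [← rootMultiplicity_prodXSubCPow e γ, h, rootMultiplicity_prodXSubCPow]

theorem eq_prodXSubCPow_rootMultiplicity {D : F[X]} (hmon : D.Monic) (hs : D.Splits) :
    D = prodXSubCPow fun γ => rootMultiplicity γ D := by
  classical
  conv_lhs => rw [hs.eq_prod_roots_of_monic hmon, Finset.prod_multiset_map_count]
  simp only [count_roots, prodXSubCPow]
  refine Finset.prod_subset (Finset.subset_univ _) fun γ _ hγ => ?_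
  rw [Multiset.mem_toFinset, ← Multiset.count_eq_zero, count_roots] at hγ
  rw [hγ, pow_zero]

theorem monic_dvd_prodXSubCPow_iff {D : F[X]} {f : F → ℕ} :
    D.Monic ∧ D ∣ prodXSubCPow f ↔ ∃ e ≤ f, D = prodXSubCPow e := by
  classical
  constructor
  · rintro ⟨hmon, hdvd⟩
    have hf := (monic_prodXSubCPow f).ne_zero
    refine ⟨_, fun γ => ?_, eq_prodXSubCPow_rootMultiplicity hmon
      ((splits_prodXSubCPow f).of_dvd hf hdvd)⟩
    have := Multiset.count_le_of_le γ (roots.le_of_dvd hf hdvd)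
    rwa [count_roots, count_roots, rootMultiplicity_prodXSubCPow] at this
  · rintro ⟨e, hle, rfl⟩
    refine ⟨monic_prodXSubCPow e, prodXSubCPow (f - e), ?_⟩
    rw [← prodXSubCPow_add, add_tsub_cancel_of_le hle]

theorem prodXSubCPow_div {e f : F → ℕ} (hle : e ≤ f) :
    prodXSubCPow f / prodXSubCPow e = prodXSubCPow (f - e) := by
  conv_lhs => rw [← add_tsub_cancel_of_le hle, prodXSubCPow_add]
  exact mul_div_cancel_left₀ _ (monic_prodXSubCPow e).ne_zero

theorem isBiunitaryDivisor_prodXSubCPow_iff {D : F[X]} {f : F → ℕ} :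
    IsBiunitaryDivisor D (prodXSubCPow f) ↔
      ∃ e : F → ℕ, (∀ γ, e γ ∈ biunitaryExponents (f γ)) ∧ D = prodXSubCPow e := by
  rw [isBiunitaryDivisor_iff_of_splits (monic_prodXSubCPow f).ne_zero (splits_prodXSubCPow f),
    ← and_assoc, monic_dvd_prodXSubCPow_iff]
  simp only [biunitaryExponents, Finset.mem_filter, Finset.mem_range, Nat.lt_succ_iff]
  constructor
  · rintro ⟨⟨e, hle, rfl⟩, h⟩
    refine ⟨e, fun γ => ⟨hle γ, ?_⟩, rfl⟩
    simpa only [prodXSubCPow_div hle, rootMultiplicity_prodXSubCPow, Pi.sub_apply] using h γ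
  · rintro ⟨e, he, rfl⟩
    have hle : e ≤ f := fun γ => (he γ).1
    refine ⟨⟨e, hle, rfl⟩, fun γ => ?_⟩
    simpa only [prodXSubCPow_div hle, rootMultiplicity_prodXSubCPow, Pi.sub_apply] using (he γ).2

theorem sigmaStarStar_prodXSubCPow (f : F → ℕ) :
    sigmaStarStar (prodXSubCPow f) = ∏ γ, ∑ b ∈ biunitaryExponents (f γ), (X - C γ) ^ b := by
  classical
  have hset : {D : F[X] | IsBiunitaryDivisor D (prodXSubCPow f)} =
      ↑((Fintype.piFinset fun γ => biunitaryExponents (f γ)).image prodXSubCPow) := by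
    ext D
    simp only [Set.mem_ofPred_eq, isBiunitaryDivisor_prodXSubCPow_iff, Finset.coe_image,
      Set.mem_image, Finset.mem_coe, Fintype.mem_piFinset, eq_comm]
  rw [sigmaStarStar, hset, finsum_mem_coe_finset,
    Finset.sum_image fun _ _ _ _ h => prodXSubCPow_injective h, Finset.prod_univ_sum]
  rfl

theorem prod_X_sub_C_eq_X_pow_card_sub_X : ∏ γ : F, (X - C γ) = X ^ Fintype.card F - X := by
  have hq := Fintype.one_lt_card (α := F)
  have hmon : (X ^ Fintype.card F - X : F[X]).Monic :=
    (monic_X_pow _).sub_of_left (by rw [degree_X, degree_X_pow]; exact_mod_cast hq)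
  refine Eq.trans ?_ (prod_multiset_X_sub_C_of_monic_of_roots_card_eq hmon ?_)
  · rw [FiniteField.roots_X_pow_card_sub_X]; rfl
  · rw [FiniteField.roots_X_pow_card_sub_X, FiniteField.X_pow_card_sub_X_natDegree_eq F hq]
    rfl

theorem prodXSubCPow_const (n : ℕ) :
    prodXSubCPow (fun _ : F => n) = (X ^ Fintype.card F - X) ^ n := by
  rw [prodXSubCPow, Finset.prod_pow, prod_X_sub_C_eq_X_pow_card_sub_X]

theorem prod_comp_X_sub_C_of_splits {P : F[X]} (hmon : P.Monic) (hs : P.Splits) :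
    ∏ γ : F, P.comp (X - C γ) = (X ^ Fintype.card F - X) ^ P.natDegree := by
  conv_lhs => rw [hs.eq_prod_roots_of_monic hmon]
  rw [← splits_iff_card_roots.mp hs]
  induction P.roots using Multiset.induction_on with
  | empty => simp
  | cons a s ih =>
    have hshift : ∏ γ : F, (X - C a).comp (X - C γ) = X ^ Fintype.card F - X := by
      rw [← prod_X_sub_C_eq_X_pow_card_sub_X]
      exact Fintype.prod_equiv (Equiv.addRight a) _ _ fun γ => by
        simp only [sub_comp, X_comp, C_comp, Equiv.coe_addRight, C_add]; ring
    simp only [Multiset.map_cons, Multiset.prod_cons, mul_comp, Finset.prod_mul_distrib, ih,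
      hshift, Multiset.card_cons, pow_succ']

theorem splits_of_dvd_X_pow_card_sub_one_sub_one {P : F[X]}
    (h : P ∣ X ^ (Fintype.card F - 1) - 1) : P.Splits := by
  have hq := Fintype.one_lt_card (α := F)
  have hL : X ^ Fintype.card F - X = X * (X ^ (Fintype.card F - 1) - 1 : F[X]) := by
    rw [mul_sub, mul_one, ← pow_succ', Nat.sub_add_cancel hq.le]
  have hsplit : (X ^ Fintype.card F - X : F[X]).Splits :=
    prod_X_sub_C_eq_X_pow_card_sub_X (F := F) ▸ Splits.prod fun γ _ => Splits.X_sub_C γ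
  exact hsplit.of_dvd (FiniteField.X_pow_card_sub_X_ne_zero F hq)
    (h.trans (hL ▸ dvd_mul_left _ _))

theorem splits_X_pow_sub_one_of_dvd {n : ℕ} (h : n ∣ Fintype.card F - 1) :
    (X ^ n - 1 : F[X]).Splits :=
  splits_of_dvd_X_pow_card_sub_one_sub_one (pow_sub_one_dvd_pow_sub_one X h)

theorem splits_X_pow_add_one_of_dvd {n : ℕ} (h : 2 * n ∣ Fintype.card F - 1) :
    (X ^ n + 1 : F[X]).Splits :=
  splits_of_dvd_X_pow_card_sub_one_sub_one <|
    (Dvd.intro (X ^ n - 1) (by ring) : (X ^ n + 1 : F[X]) ∣ X ^ (2 * n) - 1).trans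
      (pow_sub_one_dvd_pow_sub_one X h)

theorem isBUP_X_pow_card_sub_X_pow_two_mul {m : ℕ} (hm : m ≠ 0)
    (h₁ : (X ^ m - 1 : F[X]).Splits) (h₂ : (X ^ (m + 1) + 1 : F[X]).Splits) :
    IsBUP ((X ^ Fintype.card F - X : F[X]) ^ (2 * m)) := by
  set L : F[X] := X ^ Fintype.card F - X
  have hL : L ≠ 0 := FiniteField.X_pow_card_sub_X_ne_zero F Fintype.one_lt_card
  have hshift : ∏ γ : F, (X - C γ - 1) = L := by
    have := prod_comp_X_sub_C_of_splits (monic_X_sub_C (1 : F)) (Splits.X_sub_C 1)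
    rw [natDegree_X_sub_C] at this
    simpa using this
  have hminus : ∏ γ : F, ((X - C γ) ^ m - 1) = L ^ m := by
    have := prod_comp_X_sub_C_of_splits (monic_X_pow_sub_C (1 : F) hm) (by simpa using h₁)
    rw [natDegree_X_pow_sub_C] at this
    simpa [sub_comp] using this
  have hplus : ∏ γ : F, ((X - C γ) ^ (m + 1) + 1) = L ^ (m + 1) := by
    have := prod_comp_X_sub_C_of_splits (monic_X_pow_add_C (1 : F) m.succ_ne_zero)
      (by simpa using h₂)
    rw [natDegree_X_pow_add_C] at this
    simpa [add_comp] using this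
  rw [IsBUP, ← prodXSubCPow_const, sigmaStarStar_prodXSubCPow, prodXSubCPow_const]
  refine mul_left_cancel₀ hL ?_
  calc L * ∏ γ : F, ∑ b ∈ biunitaryExponents (2 * m), (X - C γ) ^ b
      = ∏ γ : F, (X - C γ - 1) * ∑ b ∈ biunitaryExponents (2 * m), (X - C γ) ^ b := by
        rw [Finset.prod_mul_distrib, hshift]
    _ = ∏ γ : F, ((X - C γ) ^ m - 1) * ((X - C γ) ^ (m + 1) + 1) := by
        simp only [sub_one_mul_sum_biunitaryExponents_two_mul _ hm]
    _ = L * L ^ (2 * m) := by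
        rw [Finset.prod_mul_distrib, hminus, hplus]; ring

end FiniteField

theorem exists_eq_two_mul_of_two_mul_add_two_eq {p m M k : ℕ} (hp : Odd p)
    (h : 2 * m + 2 = M * p ^ k) : ∃ M', M = 2 * M' ∧ m + 1 = M' * p ^ k := by
  obtain ⟨M', rfl⟩ : 2 ∣ M :=
    (Nat.coprime_two_left.mpr hp.pow).dvd_of_dvd_mul_right ⟨m + 1, by linarith⟩
  exact ⟨M', rfl, by linarith⟩

theorem ne_zero_of_mem_OmegaSet {p m : ℕ} (hp : Odd p) (hm : m ∈ OmegaSet p) : m ≠ 0 := by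
  rcases hm with ((⟨hm, -⟩ | ⟨N, hN, rfl, -⟩) | ⟨hm, -⟩) | ⟨hm, -⟩
  · exact hm.ne'
  · exact mul_ne_zero hp.pos.ne' hN.ne'
  · exact hm.ne'
  · exact hm.ne'

theorem splits_of_mem_OmegaSet [Fintype F] {p m : ℕ} [ExpChar F p] (hp : Odd p)
    (hF : Fintype.card F = p ^ 2) (hm : m ∈ OmegaSet p) :
    (X ^ m - 1 : F[X]).Splits ∧ (X ^ (m + 1) + 1 : F[X]).Splits := by
  rcases hm with ((⟨-, hd, hd'⟩ | ⟨N, -, rfl, hd, hd'⟩) | ⟨-, hd, M, hdM, h⟩) | ⟨-, hd, M, hdM, h⟩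
  · exact ⟨splits_X_pow_sub_one_of_dvd (hF ▸ hd),
      splits_X_pow_add_one_of_dvd (by rwa [hF, mul_add_one])⟩
  · refine ⟨?_, splits_X_pow_add_one_of_dvd (by rwa [hF, mul_add_one, ← mul_assoc])⟩
    simpa [mul_comm] using
      (splits_X_pow_sub_one_of_dvd (hF ▸ hd)).X_pow_mul_expChar_pow_sub_one 1
  · obtain ⟨M', rfl, hm⟩ :=
      exists_eq_two_mul_of_two_mul_add_two_eq (k := 1) hp (by rwa [pow_one])
    exact ⟨splits_X_pow_sub_one_of_dvd (hF ▸ hd),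
      hm ▸ (splits_X_pow_add_one_of_dvd (hF ▸ hdM)).X_pow_mul_expChar_pow_add_one 1⟩
  · obtain ⟨M', rfl, hm⟩ := exists_eq_two_mul_of_two_mul_add_two_eq hp h
    exact ⟨splits_X_pow_sub_one_of_dvd (hF ▸ hd),
      hm ▸ (splits_X_pow_add_one_of_dvd (hF ▸ hdM)).X_pow_mul_expChar_pow_add_one 2⟩

theorem stmt18 (p : ℕ) [Fact p.Prime] (hp : Odd p) (m : ℕ) (hm : m ∈ OmegaSet p) :
    IsBUP ((X ^ (p ^ 2) - X : Polynomial (GaloisField p 2)) ^ (2 * m)) := by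
  let : Fintype (GaloisField p 2) := Fintype.ofFinite _
  have hcard : Fintype.card (GaloisField p 2) = p ^ 2 := by
    rw [← Nat.card_eq_fintype_card, GaloisField.card p 2 two_ne_zero]
  obtain ⟨h₁, h₂⟩ := splits_of_mem_OmegaSet hp hcard hm
  exact hcard ▸ isBUP_X_pow_card_sub_X_pow_two_mul (ne_zero_of_mem_OmegaSet hp hm) h₁ h₂
end
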